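/- Let K and L be the linear maps on ℝ⁴ given by K(z₁,z₂,z₃,z₄) = (z₁, (z₂+z₃)/2, (z₂+z₃)/2, z₄) and L(z₁,z₂,z₃,z₄) = (0, (z₂−z₃)/2, (z₃−z₂)/2, 0). Let a ∈ ℝ⁴, t ≥ 0, and let N : ℝ⁴ → ℝ be any function. Suppose ẑ ∈ ℝ⁴ satisfies K(ẑ) = ẑ and (1/2)‖ẑ − K(a)‖₂² + t·N(ẑ) ≤ (1/2)‖w − K(a)‖₂² + t·N(w) for every w ∈ ℝ⁴. Then z* = L(a) + ẑ is a global minimizer over z ∈ ℝ⁴ of the function z ↦ (1/2)‖z − a‖₂² + t·N(K(z)), i.e., (1/2)‖z* − a‖₂² + t·N(K(z*)) ≤ (1/2)‖z − a‖₂² + t·N(K(z)) for every z ∈ ℝ⁴. -/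

import Mathlib

open scoped BigOperators

/-- The Euclidean norm on `ℝⁿ`. -/
noncomputable def euclNorm {n : ℕ} (v : Fin n → ℝ) : ℝ := Real.sqrt (∑ i, v i ^ 2)

/-- The linear map `K(z₁,z₂,z₃,z₄) = (z₁, (z₂+z₃)/2, (z₂+z₃)/2, z₄)` on `ℝ⁴`. -/
noncomputable def Kmap (z : Fin 4 → ℝ) : Fin 4 → ℝ :=
  ![z 0, (z 1 + z 2) / 2, (z 1 + z 2) / 2, z 3]

/-- The linear map `L(z₁,z₂,z₃,z₄) = (0, (z₂−z₃)/2, (z₃−z₂)/2, 0)` on `ℝ⁴`. -/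
noncomputable def Lmap (z : Fin 4 → ℝ) : Fin 4 → ℝ :=
  ![0, (z 1 - z 2) / 2, (z 2 - z 1) / 2, 0]

/-
`K` and `L` are the orthogonal projections onto the two complementary subspaces
`{z₂ = z₃}` and `{z₁ = z₄ = 0, z₂ = -z₃}`, so `a = L a + K a` and `K (L a) = 0`.
Hence for `z* = L a + ẑ` with `K ẑ = ẑ` we get `K z* = ẑ` and `z* - a = ẑ - K a`, so the
objective at `z*` is the value of the prox problem at `ẑ`; for any `z` that value is at most
the prox objective at `K z`, which in turn is at most the objective at `z` because
`‖K z - K a‖ = ‖K (z - a)‖ ≤ ‖z - a‖`.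
-/

theorem euclNorm_sq {n : ℕ} (v : Fin n → ℝ) : euclNorm v ^ 2 = ∑ i, v i ^ 2 :=
  Real.sq_sqrt (Finset.sum_nonneg fun _ _ => sq_nonneg _)

theorem Kmap_add (v w : Fin 4 → ℝ) : Kmap (v + w) = Kmap v + Kmap w := by
  ext i; fin_cases i <;> simp [Kmap] <;> ring

theorem Kmap_sub (v w : Fin 4 → ℝ) : Kmap (v - w) = Kmap v - Kmap w := by
  ext i; fin_cases i <;> simp [Kmap] <;> ring

theorem Kmap_Lmap (v : Fin 4 → ℝ) : Kmap (Lmap v) = 0 := by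
  ext i; fin_cases i <;> simp [Kmap, Lmap] <;> ring

theorem Kmap_eq_sub_Lmap (v : Fin 4 → ℝ) : Kmap v = v - Lmap v := by
  ext i; fin_cases i <;> simp [Kmap, Lmap] <;> ring

theorem euclNorm_Kmap_sq_le (v : Fin 4 → ℝ) : euclNorm (Kmap v) ^ 2 ≤ euclNorm v ^ 2 := by
  rw [euclNorm_sq, euclNorm_sq, Fin.sum_univ_four, Fin.sum_univ_four]
  simp only [Kmap, Matrix.cons_val]
  nlinarith [sq_nonneg (v 1 - v 2)]

theorem prox_split_K_general
    (a : Fin 4 → ℝ) (t : ℝ) (N : (Fin 4 → ℝ) → ℝ)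
    (zhat : Fin 4 → ℝ) (hfix : Kmap zhat = zhat)
    (hmin : ∀ w : Fin 4 → ℝ,
      1 / 2 * euclNorm (zhat - Kmap a) ^ 2 + t * N zhat ≤
      1 / 2 * euclNorm (w - Kmap a) ^ 2 + t * N w) :
    ∀ z : Fin 4 → ℝ,
      1 / 2 * euclNorm ((Lmap a + zhat) - a) ^ 2 + t * N (Kmap (Lmap a + zhat)) ≤
      1 / 2 * euclNorm (z - a) ^ 2 + t * N (Kmap z) := by
  intro z
  have hK : Kmap (Lmap a + zhat) = zhat := by rw [Kmap_add, Kmap_Lmap, hfix, zero_add]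
  have hres : (Lmap a + zhat) - a = zhat - Kmap a := by rw [Kmap_eq_sub_Lmap]; abel
  calc 1 / 2 * euclNorm ((Lmap a + zhat) - a) ^ 2 + t * N (Kmap (Lmap a + zhat))
      = 1 / 2 * euclNorm (zhat - Kmap a) ^ 2 + t * N zhat := by rw [hK, hres]
    _ ≤ 1 / 2 * euclNorm (Kmap z - Kmap a) ^ 2 + t * N (Kmap z) := hmin (Kmap z)
    _ ≤ 1 / 2 * euclNorm (z - a) ^ 2 + t * N (Kmap z) := by
      rw [← Kmap_sub]
      linarith [euclNorm_Kmap_sq_le (z - a)]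

/-- Proposition 3 of the paper in abstract form: if `ẑ` lies in the range of `K`
(i.e. `K ẑ = ẑ`) and minimizes `(1/2)‖w − K(a)‖² + t·N(w)`, then `L(a) + ẑ` is a
global minimizer of `z ↦ (1/2)‖z − a‖² + t·N(K(z))`. -/
theorem prox_split_K
    (a : Fin 4 → ℝ) (t : ℝ) (ht : 0 ≤ t) (N : (Fin 4 → ℝ) → ℝ)
    (zhat : Fin 4 → ℝ) (hfix : Kmap zhat = zhat)
    (hmin : ∀ w : Fin 4 → ℝ,
      1 / 2 * euclNorm (zhat - Kmap a) ^ 2 + t * N zhat ≤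
      1 / 2 * euclNorm (w - Kmap a) ^ 2 + t * N w) :
    ∀ z : Fin 4 → ℝ,
      1 / 2 * euclNorm ((Lmap a + zhat) - a) ^ 2 + t * N (Kmap (Lmap a + zhat)) ≤
      1 / 2 * euclNorm (z - a) ^ 2 + t * N (Kmap z) :=
  prox_split_K_general a t N zhat hfix hmin
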